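/- arXiv:2501.16076 — 4 statements merged into one kernel-verified Lean document; each statement's English description precedes it below -/
import Mathlib

section
/- Let C be an arbitrary nonempty set, n a positive integer, and f : ℝⁿ × C → ℝ and K ≥ 0 such that for all x, y ∈ ℝⁿ and all L ∈ C, |f(x, L) − f(y, L)| ≤ K·‖x − y‖ (Euclidean norm). Let s, ŝ ∈ ℝⁿ, let L* ∈ C satisfy f(s, L*) ≤ f(s, L) for all L ∈ C, and let L̂ ∈ C satisfy f(ŝ, L̂) ≤ f(ŝ, L) for all L ∈ C. If in addition f(s, L*) > 0, then f(s, L̂) / f(s, L*) ≤ 1 + 2K·‖s − ŝ‖ / f(s, L*). -/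
/-- Multiplicative error propagation: if `f` is `K`-Lipschitz in the opinion vector and the
true optimum value is positive, the approximation ratio of the optimizer for the reconstructed
opinions is at most `1 + 2K‖s - ŝ‖ / f(s, L*)`. -/
theorem error_propagation_ratio {C : Type*} [Nonempty C] {n : ℕ} (hn : 0 < n)
    (f : EuclideanSpace ℝ (Fin n) → C → ℝ) (K : ℝ) (hK : 0 ≤ K)
    (hLip : ∀ (x y : EuclideanSpace ℝ (Fin n)) (L : C), |f x L - f y L| ≤ K * ‖x - y‖)
    (s shat : EuclideanSpace ℝ (Fin n)) (Lstar Lhat : C)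
    (hstar : ∀ L : C, f s Lstar ≤ f s L)
    (hhat : ∀ L : C, f shat Lhat ≤ f shat L)
    (hpos : 0 < f s Lstar) :
    f s Lhat / f s Lstar ≤ 1 + 2 * K * ‖s - shat‖ / f s Lstar := by
  have h1 : f s Lhat - f shat Lhat ≤ K * ‖s - shat‖ :=
    (abs_le.mp (hLip s shat Lhat)).2
  have h2 : f shat Lhat ≤ f shat Lstar := hhat Lstar
  have h3 : f shat Lstar - f s Lstar ≤ K * ‖shat - s‖ :=
    (abs_le.mp (hLip shat s Lstar)).2
  have hnorm : ‖shat - s‖ = ‖s - shat‖ := norm_sub_rev _ _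
  have key : f s Lhat ≤ f s Lstar + 2 * K * ‖s - shat‖ := by
    rw [hnorm] at h3; linarith
  have h4 : (1:ℝ) + 2 * K * ‖s - shat‖ / f s Lstar
      = (f s Lstar + 2 * K * ‖s - shat‖) / f s Lstar := by
    field_simp
  rw [h4]
  exact (div_le_div_iff_of_pos_right hpos).mpr key
end

section
/- Fix a positive integer n and a vector s ∈ ℝⁿ. For every pair of real symmetric positive semidefinite n×n matrices L₁, L₂ and every λ ∈ [0,1], it holds that sᵀ(I + λL₁ + (1−λ)L₂)⁻¹ s ≤ λ·sᵀ(I + L₁)⁻¹ s + (1−λ)·sᵀ(I + L₂)⁻¹ s. In other words, the PD-Undir objective L ↦ sᵀ(I + L)⁻¹ s is convex on the cone of symmetric positive semidefinite matrices. -/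
open Matrix

/-!
For positive definite `X`, the quadratic form of the inverse has the variational description
`s ⬝ᵥ X⁻¹ *ᵥ s = max_y (2 (s ⬝ᵥ y) - y ⬝ᵥ X *ᵥ y)`, attained at `y = X⁻¹ *ᵥ s`.
For fixed `y` the expression is affine in `X`, so the maximum is convex in `X`.
Finally `I + (t L₁ + (1 - t) L₂) = t (I + L₁) + (1 - t) (I + L₂)`.
-/

namespace Matrix.PosDef

variable {n : Type*} [Fintype n] {X : Matrix n n ℝ}

lemma mulVec_inv_mulVec [DecidableEq n] (hX : X.PosDef) (s : n → ℝ) :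
    X *ᵥ (X⁻¹ *ᵥ s) = s := by
  rw [mulVec_mulVec, mul_nonsing_inv _ ((isUnit_iff_isUnit_det X).mp hX.isUnit), one_mulVec]

lemma dotProduct_mulVec_comm (hX : X.PosDef) (v w : n → ℝ) :
    v ⬝ᵥ X *ᵥ w = w ⬝ᵥ X *ᵥ v := by
  rw [dotProduct_mulVec, ← mulVec_transpose, isHermitian_iff_isSymm.mp hX.isHermitian,
    dotProduct_comm]

theorem two_mul_dotProduct_sub_le_dotProduct_inv_mulVec [DecidableEq n] (hX : X.PosDef)
    (s y : n → ℝ) :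
    2 * (s ⬝ᵥ y) - y ⬝ᵥ X *ᵥ y ≤ s ⬝ᵥ X⁻¹ *ᵥ s := by
  set w := X⁻¹ *ᵥ s
  have hXw : X *ᵥ w = s := hX.mulVec_inv_mulVec s
  have hsq : 0 ≤ (y - w) ⬝ᵥ X *ᵥ (y - w) := by
    simpa using hX.posSemidef.dotProduct_mulVec_nonneg (y - w)
  have hexpand : (y - w) ⬝ᵥ X *ᵥ (y - w) = y ⬝ᵥ X *ᵥ y - 2 * (s ⬝ᵥ y) + s ⬝ᵥ w := by
    rw [mulVec_sub, dotProduct_sub, sub_dotProduct, sub_dotProduct, hX.dotProduct_mulVec_comm w y,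
      hXw, dotProduct_comm y s, dotProduct_comm w s]
    ring
  linarith

theorem dotProduct_inv_mulVec_eq [DecidableEq n] (hX : X.PosDef) (s : n → ℝ) :
    s ⬝ᵥ X⁻¹ *ᵥ s = 2 * (s ⬝ᵥ X⁻¹ *ᵥ s) - (X⁻¹ *ᵥ s) ⬝ᵥ X *ᵥ (X⁻¹ *ᵥ s) := by
  rw [hX.mulVec_inv_mulVec, dotProduct_comm _ s]
  ring

end Matrix.PosDef

theorem convex_setOf_posDef {n : Type*} : Convex ℝ {X : Matrix n n ℝ | X.PosDef} := by
  intro X hX Y hY a b ha hb hab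
  rcases ha.eq_or_lt with rfl | ha
  · simpa [show b = 1 by linarith] using hY
  · exact (PosDef.smul hX ha).add_posSemidef (PosSemidef.smul hY.posSemidef hb)

theorem convexOn_dotProduct_inv_mulVec {n : Type*} [Fintype n] [DecidableEq n] (s : n → ℝ) :
    ConvexOn ℝ {X : Matrix n n ℝ | X.PosDef} fun X => s ⬝ᵥ X⁻¹ *ᵥ s := by
  refine ⟨convex_setOf_posDef, fun X hX Y hY a b ha hb hab => ?_⟩
  have hZ : (a • X + b • Y).PosDef := convex_setOf_posDef hX hY ha hb hab
  set y := (a • X + b • Y)⁻¹ *ᵥ s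
  calc s ⬝ᵥ (a • X + b • Y)⁻¹ *ᵥ s
      = 2 * (s ⬝ᵥ y) - y ⬝ᵥ (a • X + b • Y) *ᵥ y := hZ.dotProduct_inv_mulVec_eq s
    _ = a * (2 * (s ⬝ᵥ y) - y ⬝ᵥ X *ᵥ y) + b * (2 * (s ⬝ᵥ y) - y ⬝ᵥ Y *ᵥ y) := by
        rw [add_mulVec, smul_mulVec, smul_mulVec, dotProduct_add, dotProduct_smul,
          dotProduct_smul, smul_eq_mul, smul_eq_mul]
        linear_combination (-2 * (s ⬝ᵥ y)) * hab
    _ ≤ a * (s ⬝ᵥ X⁻¹ *ᵥ s) + b * (s ⬝ᵥ Y⁻¹ *ᵥ s) := by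
        gcongr
        · exact PosDef.two_mul_dotProduct_sub_le_dotProduct_inv_mulVec hX s y
        · exact PosDef.two_mul_dotProduct_sub_le_dotProduct_inv_mulVec hY s y

theorem pdUndir_convex_general {n : ℕ} (s : Fin n → ℝ)
    (L1 L2 : Matrix (Fin n) (Fin n) ℝ) (h1 : L1.PosSemidef) (h2 : L2.PosSemidef)
    (t : ℝ) (ht0 : 0 ≤ t) (ht1 : t ≤ 1) :
    s ⬝ᵥ ((1 + (t • L1 + (1 - t) • L2))⁻¹).mulVec s ≤
      t * (s ⬝ᵥ ((1 + L1)⁻¹).mulVec s) + (1 - t) * (s ⬝ᵥ ((1 + L2)⁻¹).mulVec s) := by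
  have hsplit : 1 + (t • L1 + (1 - t) • L2) = t • (1 + L1) + (1 - t) • (1 + L2) := by module
  rw [hsplit]
  exact (convexOn_dotProduct_inv_mulVec s).2 (PosDef.one.add_posSemidef h1)
    (PosDef.one.add_posSemidef h2) ht0 (sub_nonneg.2 ht1) (add_sub_cancel t 1)

/-- Convexity of the PD-Undir objective `L ↦ sᵀ (I + L)⁻¹ s` on the cone of symmetric
positive semidefinite matrices. -/
theorem pdUndir_convex {n : ℕ} (hn : 0 < n) (s : Fin n → ℝ)
    (L1 L2 : Matrix (Fin n) (Fin n) ℝ) (h1 : L1.PosSemidef) (h2 : L2.PosSemidef)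
    (t : ℝ) (ht0 : 0 ≤ t) (ht1 : t ≤ 1) :
    s ⬝ᵥ ((1 + (t • L1 + (1 - t) • L2))⁻¹).mulVec s ≤
      t * (s ⬝ᵥ ((1 + L1)⁻¹).mulVec s) + (1 - t) * (s ⬝ᵥ ((1 + L2)⁻¹).mulVec s) :=
  pdUndir_convex_general s L1 L2 h1 h2 t ht0 ht1
end

section
/- Let s = (0, 1, 1) ∈ ℝ³ and let A₁ and A₂ be the 3×3 real matrices A₁ = [[0, 1, 0], [1/100, 0, 99/100], [1, 0, 0]] and A₂ = [[0, 1, 0], [1/3, 0, 2/3], [0, 1, 0]]. Define f(A) = sᵀ(2I − A)^{−⊤}(2I − A)^{−1} s. Then f((A₁ + A₂)/2) > (f(A₁) + f(A₂))/2; in particular, the P-Dir objective A ↦ sᵀ(2I − A)^{−⊤}(2I − A)^{−1} s is not matrix-convex. -/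
open Matrix

/-- The P-Dir objective at opinion vector `s`:
`f(A) = sᵀ (2I − A)⁻ᵀ (2I − A)⁻¹ s`. -/
noncomputable def pDir (s : Fin 3 → ℝ) (A : Matrix (Fin 3) (Fin 3) ℝ) : ℝ :=
  s ⬝ᵥ (((2 - A)⁻¹)ᵀ * (2 - A)⁻¹).mulVec s

lemma two_eq' : (2 : Matrix (Fin 3) (Fin 3) ℝ) = 1 + 1 := by norm_num

lemma pDir_val' (s : Fin 3 → ℝ) (A B : Matrix (Fin 3) (Fin 3) ℝ)
    (h : (2 - A) * B = 1) : pDir s A = s ⬝ᵥ (Bᵀ * B).mulVec s := by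
  rw [pDir, Matrix.inv_eq_right_inv h]

/-- Counterexample to the matrix-convexity of the P-Dir objective. -/
theorem pDir_not_convex :
    let s : Fin 3 → ℝ := ![0, 1, 1]
    let A1 : Matrix (Fin 3) (Fin 3) ℝ := !![0, 1, 0; 1/100, 0, 99/100; 1, 0, 0]
    let A2 : Matrix (Fin 3) (Fin 3) ℝ := !![0, 1, 0; 1/3, 0, 2/3; 0, 1, 0]
    pDir s (((1 : ℝ) / 2) • (A1 + A2)) > (pDir s A1 + pDir s A2) / 2 ∧
      ¬ ∀ (B1 B2 : Matrix (Fin 3) (Fin 3) ℝ) (t : ℝ), 0 ≤ t → t ≤ 1 →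
          pDir s (t • B1 + (1 - t) • B2) ≤ t * pDir s B1 + (1 - t) * pDir s B2 := by
  intro s A1 A2
  have h1 : pDir s A1 = 77334/54289 := by
    rw [pDir_val' _ _ !![400/699, 200/699, 33/233; 101/699, 400/699, 66/233;
        200/699, 100/699, 133/233]]
    · simp [Matrix.mul_apply, Matrix.mulVec, dotProduct, Fin.sum_univ_three,
        Matrix.transpose_apply, Matrix.vecHead, Matrix.vecTail, s]
      norm_num
    · ext i j
      fin_cases i <;> fin_cases j <;>
        simp [A1, Matrix.mul_apply, Fin.sum_univ_three, Matrix.sub_apply, Matrix.one_apply,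
          two_eq', Matrix.add_apply] <;> norm_num
  have h2 : pDir s A2 = 203/108 := by
    rw [pDir_val' _ _ !![5/9, 1/3, 1/9; 1/9, 2/3, 2/9; 1/18, 1/3, 11/18]]
    · simp [Matrix.mul_apply, Matrix.mulVec, dotProduct, Fin.sum_univ_three,
        Matrix.transpose_apply, Matrix.vecHead, Matrix.vecTail, s]
      norm_num
    · ext i j
      fin_cases i <;> fin_cases j <;>
        simp [A2, Matrix.mul_apply, Fin.sum_univ_three, Matrix.sub_apply, Matrix.one_apply,
          two_eq', Matrix.add_apply] <;> norm_num
  have hm : pDir s (((1 : ℝ) / 2) • (A1 + A2)) = 98479416/59243809 := by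
    rw [pDir_val' _ _ !![4303/7697, 2400/7697, 994/7697; 909/7697, 4800/7697, 1988/7697;
        1303/7697, 1800/7697, 4594/7697]]
    · simp [Matrix.mul_apply, Matrix.mulVec, dotProduct, Fin.sum_univ_three,
        Matrix.transpose_apply, Matrix.vecHead, Matrix.vecTail, s]
      norm_num
    · ext i j
      fin_cases i <;> fin_cases j <;>
        simp [A1, A2, Matrix.mul_apply, Fin.sum_univ_three, Matrix.sub_apply, Matrix.one_apply,
          two_eq', Matrix.add_apply, Matrix.smul_apply] <;> norm_num
  refine ⟨by rw [h1, h2, hm]; norm_num, fun h => ?_⟩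
  have key := h A1 A2 (1/2) (by norm_num) (by norm_num)
  rw [show ((1:ℝ)/2) • A1 + (1-(1:ℝ)/2) • A2 = ((1:ℝ)/2) • (A1 + A2) by
      rw [smul_add]; norm_num] at key
  rw [hm, h1, h2] at key
  norm_num at key
end

section
/- Let G be a finite simple graph on n vertices, let L be its Laplacian matrix over ℝ, and let Δ be the maximum degree of G. Then for all s, ŝ ∈ ℝⁿ with ‖s‖ ≤ 1 and ‖ŝ‖ ≤ 1 (Euclidean norm), |sᵀ(I + L)⁻¹ L (I + L)⁻¹ s − ŝᵀ(I + L)⁻¹ L (I + L)⁻¹ ŝ| ≤ 2Δ·‖s − ŝ‖. That is, the D-Undir objective s ↦ sᵀ(I + L)⁻¹ L (I + L)⁻¹ s is Lipschitz continuous on the closed unit ball with Lipschitz constant K = 2Δ. -/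
open Matrix
open scoped RealInnerProductSpace

/-!
Write `T = L` and `S = (I + L)⁻¹`, so that `S + T S = I`. Since `⟪S x, T S x⟫ ≥ 0`, expanding
`‖x‖² = ‖S x + T S x‖²` gives `‖S x‖² + ‖T S x‖² ≤ ‖x‖²`; hence both `S` and `T S` are
contractions, and so is the symmetric operator `M = S T S`. For symmetric `M`,
`⟪s, M s⟫ - ⟪t, M t⟫ = ⟪s - t, M (s + t)⟫`, which is at most `2 ‖s - t‖` in absolute value on the
unit ball. This bound is `≤ 2Δ ‖s - t‖` as soon as `Δ ≥ 1`, and for `Δ = 0` the graph has no edges,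
so `L = 0`.
-/

namespace LinearMap

variable {E : Type*} [NormedAddCommGroup E] [InnerProductSpace ℝ E]

theorem IsSymmetric.inner_map_self_sub_inner_map_self {M : E →ₗ[ℝ] E} (hM : M.IsSymmetric)
    (s t : E) : ⟪s, M s⟫ - ⟪t, M t⟫ = ⟪s - t, M (s + t)⟫ := by
  have hst : ⟪s, M t⟫ = ⟪t, M s⟫ := by rw [← hM, real_inner_comm]
  rw [map_add, inner_add_right, inner_sub_left, inner_sub_left, hst]
  ring

theorem IsSymmetric.abs_inner_map_self_sub_le {M : E →ₗ[ℝ] E} (hM : M.IsSymmetric) {C : ℝ}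
    (hC : ∀ x, ‖M x‖ ≤ C * ‖x‖) (s t : E) :
    |⟪s, M s⟫ - ⟪t, M t⟫| ≤ C * ‖s - t‖ * ‖s + t‖ := by
  rw [hM.inner_map_self_sub_inner_map_self]
  calc |⟪s - t, M (s + t)⟫| ≤ ‖s - t‖ * ‖M (s + t)‖ := abs_real_inner_le_norm _ _
    _ ≤ ‖s - t‖ * (C * ‖s + t‖) := by gcongr; exact hC _
    _ = C * ‖s - t‖ * ‖s + t‖ := by ring

variable {T S : E →ₗ[ℝ] E}

theorem IsPositive.norm_sq_add_norm_sq_le (hT : T.IsPositive) (hS : ∀ x, S x + T (S x) = x)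
    (x : E) : ‖S x‖ ^ 2 + ‖T (S x)‖ ^ 2 ≤ ‖x‖ ^ 2 := by
  have := hT.inner_nonneg_right (S x)
  calc ‖S x‖ ^ 2 + ‖T (S x)‖ ^ 2 ≤ ‖S x + T (S x)‖ ^ 2 := by
        rw [norm_add_sq_real]; linarith
    _ = ‖x‖ ^ 2 := by rw [hS]

theorem IsPositive.norm_map_le_of_add_map_eq (hT : T.IsPositive) (hS : ∀ x, S x + T (S x) = x)
    (x : E) : ‖S x‖ ≤ ‖x‖ ∧ ‖T (S x)‖ ≤ ‖x‖ := by
  have := hT.norm_sq_add_norm_sq_le hS x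
  exact ⟨le_of_sq_le_sq (by nlinarith) (norm_nonneg x),
    le_of_sq_le_sq (by nlinarith) (norm_nonneg x)⟩

theorem IsPositive.isSymmetric_of_add_map_eq (hT : T.IsPositive) (hS : ∀ x, S x + T (S x) = x) :
    S.IsSymmetric := fun x y => by
  conv_lhs => rw [← hS y]
  conv_rhs => rw [← hS x]
  rw [inner_add_right, inner_add_left, hT.isSymmetric]

theorem IsPositive.abs_inner_conj_sub_le (hT : T.IsPositive) (hS : ∀ x, S x + T (S x) = x)
    {s t : E} (hs : ‖s‖ ≤ 1) (ht : ‖t‖ ≤ 1) :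
    |⟪s, S (T (S s))⟫ - ⟪t, S (T (S t))⟫| ≤ 2 * ‖s - t‖ := by
  have hS_symm := hT.isSymmetric_of_add_map_eq hS
  have hM : (S ∘ₗ T ∘ₗ S).IsSymmetric := fun x y => by
    simp only [comp_apply]
    rw [hS_symm, hT.isSymmetric, hS_symm]
  have hM_contr : ∀ x, ‖(S ∘ₗ T ∘ₗ S) x‖ ≤ 1 * ‖x‖ := fun x => by
    rw [one_mul]
    exact (hT.norm_map_le_of_add_map_eq hS _).1.trans (hT.norm_map_le_of_add_map_eq hS x).2
  calc _ ≤ 1 * ‖s - t‖ * ‖s + t‖ := hM.abs_inner_map_self_sub_le hM_contr s t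
    _ ≤ 1 * ‖s - t‖ * 2 := by gcongr; linarith [norm_add_le s t]
    _ = 2 * ‖s - t‖ := by ring

end LinearMap

namespace Matrix

variable {ι : Type*} [Fintype ι] [DecidableEq ι] {A : Matrix ι ι ℝ}

theorem PosSemidef.toEuclideanLin_inv_one_add_add (hA : A.PosSemidef) (x : EuclideanSpace ℝ ι) :
    toEuclideanLin (1 + A)⁻¹ x + toEuclideanLin A (toEuclideanLin (1 + A)⁻¹ x) = x := by
  have hdet : IsUnit (1 + A).det :=
    (isUnit_iff_isUnit_det _).mp (PosDef.one.add_posSemidef hA).isUnit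
  calc _ = toEuclideanLin ((1 + A) * (1 + A)⁻¹) x := by simp [add_mul]
    _ = x := by simp [mul_nonsing_inv _ hdet]

theorem PosSemidef.abs_inner_toEuclideanLin_sub_le (hA : A.PosSemidef)
    {s t : EuclideanSpace ℝ ι} (hs : ‖s‖ ≤ 1) (ht : ‖t‖ ≤ 1) :
    |⟪s, toEuclideanLin ((1 + A)⁻¹ * A * (1 + A)⁻¹) s⟫ -
      ⟪t, toEuclideanLin ((1 + A)⁻¹ * A * (1 + A)⁻¹) t⟫| ≤ 2 * ‖s - t‖ := by
  simpa only [toLpLin_mul_same, LinearMap.comp_apply] using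
    (isPositive_toEuclideanLin_iff.mpr hA).abs_inner_conj_sub_le
      hA.toEuclideanLin_inv_one_add_add hs ht

end Matrix

theorem SimpleGraph.lapMatrix_eq_zero_of_maxDegree_eq_zero {V : Type*} [Fintype V]
    [DecidableEq V] (G : SimpleGraph V) [DecidableRel G.Adj] (h : G.maxDegree = 0) :
    G.lapMatrix ℝ = 0 := by
  obtain rfl := G.maxDegree_eq_zero_iff.mp h
  ext i j
  simp [SimpleGraph.lapMatrix, SimpleGraph.degMatrix]

theorem dUndir_lipschitz_general {n : ℕ} (G : SimpleGraph (Fin n))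
    [DecidableRel G.Adj] (s shat : EuclideanSpace ℝ (Fin n))
    (hs : ‖s‖ ≤ 1) (hshat : ‖shat‖ ≤ 1) :
    |⟪s, Matrix.toEuclideanLin
          ((1 + G.lapMatrix ℝ)⁻¹ * G.lapMatrix ℝ * (1 + G.lapMatrix ℝ)⁻¹) s⟫ -
        ⟪shat, Matrix.toEuclideanLin
          ((1 + G.lapMatrix ℝ)⁻¹ * G.lapMatrix ℝ * (1 + G.lapMatrix ℝ)⁻¹) shat⟫| ≤
      2 * (G.maxDegree : ℝ) * ‖s - shat‖ := by
  obtain hΔ | hΔ := Nat.eq_zero_or_pos G.maxDegree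
  · simp [G.lapMatrix_eq_zero_of_maxDegree_eq_zero hΔ, hΔ]
  have hΔ_ge_one : (1 : ℝ) ≤ G.maxDegree := by exact_mod_cast hΔ
  calc _ ≤ 2 * ‖s - shat‖ := (G.posSemidef_lapMatrix ℝ).abs_inner_toEuclideanLin_sub_le hs hshat
    _ ≤ 2 * (G.maxDegree : ℝ) * ‖s - shat‖ := by
      gcongr
      exact le_mul_of_one_le_right zero_le_two hΔ_ge_one

/-- Lipschitz continuity of the D-Undir objective `s ↦ sᵀ (I + L)⁻¹ L (I + L)⁻¹ s` on the
closed unit ball, with Lipschitz constant `2Δ(G)`, for the Laplacian `L` of a finite simple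
graph `G` of maximum degree `Δ(G)`. -/
theorem dUndir_lipschitz {n : ℕ} (hn : 0 < n) (G : SimpleGraph (Fin n))
    [DecidableRel G.Adj] (s shat : EuclideanSpace ℝ (Fin n))
    (hs : ‖s‖ ≤ 1) (hshat : ‖shat‖ ≤ 1) :
    |⟪s, Matrix.toEuclideanLin
          ((1 + G.lapMatrix ℝ)⁻¹ * G.lapMatrix ℝ * (1 + G.lapMatrix ℝ)⁻¹) s⟫ -
        ⟪shat, Matrix.toEuclideanLin
          ((1 + G.lapMatrix ℝ)⁻¹ * G.lapMatrix ℝ * (1 + G.lapMatrix ℝ)⁻¹) shat⟫| ≤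
      2 * (G.maxDegree : ℝ) * ‖s - shat‖ :=
  dUndir_lipschitz_general G s shat hs hshat
end
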